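/- A simple graph G has chromatic number c if and only if for every natural number s the jet graph J_s(G) has chromatic number c. -/

import Mathlib

/-- The jet graph of order `s` of a simple graph `G`: vertices are pairs `(v, i)`
with `i ∈ {0,…,s}`, and `(a,i)` is adjacent to `(b,j)` iff `G.Adj a b` and `i + j ≤ s`. -/
def jetGraph {V : Type*} (G : SimpleGraph V) (s : ℕ) : SimpleGraph (V × Fin (s + 1)) where
  Adj p q := G.Adj p.1 q.1 ∧ p.2.val + q.2.val ≤ s
  symm := by
    constructor
    intro p q h
    exact ⟨h.1.symm, by omega⟩
  loopless := by
    constructor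
    intro p h
    exact G.loopless.irrefl _ h.1

namespace jetGraph

variable {V : Type*} (G : SimpleGraph V) (s : ℕ)

def fstHom : jetGraph G s →g G where
  toFun := Prod.fst
  map_rel' h := h.1

def zeroHom : G →g jetGraph G s where
  toFun v := (v, 0)
  map_rel' h := ⟨h, by simp⟩

theorem chromaticNumber_eq : (jetGraph G s).chromaticNumber = G.chromaticNumber :=
  le_antisymm (SimpleGraph.chromaticNumber_mono_of_hom (fstHom G s))
    (SimpleGraph.chromaticNumber_mono_of_hom (zeroHom G s))

end jetGraph

theorem jetGraph_chromaticNumber {V : Type*} (G : SimpleGraph V) (c : ℕ∞) :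
    G.chromaticNumber = c ↔ ∀ s : ℕ, (jetGraph G s).chromaticNumber = c := by
  simp only [jetGraph.chromaticNumber_eq, forall_const]
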